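/- arXiv:2110.05436 — 5 statements merged into one kernel-verified Lean document; each statement's English description precedes it below -/
import Mathlib

section
/- Let u, v : ℝ² → ℝ⁴ be smooth and M an invertible 4×4 real matrix with M·u = v pointwise. Define I₁(w) = det[w_{t₀⁴}, w_{t₁}, w_{t₀²}, w_{t₀³}] / det[w_{t₀}, w_{t₁}, w_{t₀²}, w_{t₀³}], where subscripts denote iterated partial derivatives. Then at every point where det[u_{t₀}, u_{t₁}, u_{t₀²}, u_{t₀³}] ≠ 0, we have I₁(u) = I₁(v). -/
/-- Partial derivative with respect to the first variable. -/
noncomputable def pd0 {E : Type*} [NormedAddCommGroup E] [NormedSpace ℝ E]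
    (f : ℝ × ℝ → E) : ℝ × ℝ → E :=
  fun x => deriv (fun s => f (s, x.2)) x.1

/-- Partial derivative with respect to the second variable. -/
noncomputable def pd1 {E : Type*} [NormedAddCommGroup E] [NormedSpace ℝ E]
    (f : ℝ × ℝ → E) : ℝ × ℝ → E :=
  fun x => deriv (fun s => f (x.1, s)) x.2

/-- Determinant of the 4×4 matrix with columns `a, b, c, d`. -/
noncomputable def dC (a b c d : Fin 4 → ℝ) : ℝ :=
  Matrix.det (Matrix.of fun i j => ![a, b, c, d] j i)

/-- The invariant `I₁(w) = det[w_{t₀⁴}, w_{t₁}, w_{t₀²}, w_{t₀³}] /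
det[w_{t₀}, w_{t₁}, w_{t₀²}, w_{t₀³}]`. -/
noncomputable def I1 (w : ℝ × ℝ → (Fin 4 → ℝ)) : ℝ × ℝ → ℝ :=
  fun x => dC ((pd0^[4] w) x) (pd1 w x) ((pd0^[2] w) x) ((pd0^[3] w) x) /
    dC (pd0 w x) (pd1 w x) ((pd0^[2] w) x) ((pd0^[3] w) x)

lemma pd0_fderiv {E : Type*} [NormedAddCommGroup E] [NormedSpace ℝ E]
    {f : ℝ × ℝ → E} {x : ℝ × ℝ} (hf : DifferentiableAt ℝ f x) :
    pd0 f x = fderiv ℝ f x (1, 0) := by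
  have h1 : HasDerivAt (fun s : ℝ => (s, x.2)) ((1:ℝ), (0:ℝ)) x.1 :=
    HasDerivAt.prodMk (hasDerivAt_id _) (hasDerivAt_const _ _)
  have h2 := hf.hasFDerivAt.comp_hasDerivAt x.1 (by simpa using h1)
  simpa [pd0, Function.comp_def] using h2.deriv

lemma pd1_fderiv {E : Type*} [NormedAddCommGroup E] [NormedSpace ℝ E]
    {f : ℝ × ℝ → E} {x : ℝ × ℝ} (hf : DifferentiableAt ℝ f x) :
    pd1 f x = fderiv ℝ f x (0, 1) := by
  have h1 : HasDerivAt (fun s : ℝ => (x.1, s)) ((0:ℝ), (1:ℝ)) x.2 :=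
    HasDerivAt.prodMk (hasDerivAt_const _ _) (hasDerivAt_id _)
  have h2 := hf.hasFDerivAt.comp_hasDerivAt x.2 (by simpa using h1)
  simpa [pd1, Function.comp_def] using h2.deriv

lemma contDiff_pd0 {E : Type*} [NormedAddCommGroup E] [NormedSpace ℝ E]
    {f : ℝ × ℝ → E} (hf : ContDiff ℝ (⊤ : ℕ∞) f) : ContDiff ℝ (⊤ : ℕ∞) (pd0 f) := by
  have : pd0 f = fun x => fderiv ℝ f x (1, 0) :=
    funext fun x => pd0_fderiv (hf.differentiable (by simp)).differentiableAt
  rw [this]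
  exact (hf.fderiv_right (by exact_mod_cast le_top)).clm_apply contDiff_const

lemma pd0_clm {E F : Type*} [NormedAddCommGroup E] [NormedSpace ℝ E]
    [NormedAddCommGroup F] [NormedSpace ℝ F]
    (L : E →L[ℝ] F) {f : ℝ × ℝ → E} (hf : Differentiable ℝ f) (x : ℝ × ℝ) :
    pd0 (fun y => L (f y)) x = L (pd0 f x) := by
  rw [pd0_fderiv (f := fun y => L (f y)) ((L.differentiable.comp hf).differentiableAt),
    pd0_fderiv hf.differentiableAt]
  have h : fderiv ℝ (fun y => L (f y)) x = L.comp (fderiv ℝ f x) :=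
    (L.hasFDerivAt.comp x (hf.differentiableAt).hasFDerivAt).fderiv
  rw [h]; rfl

lemma pd1_clm {E F : Type*} [NormedAddCommGroup E] [NormedSpace ℝ E]
    [NormedAddCommGroup F] [NormedSpace ℝ F]
    (L : E →L[ℝ] F) {f : ℝ × ℝ → E} (hf : Differentiable ℝ f) (x : ℝ × ℝ) :
    pd1 (fun y => L (f y)) x = L (pd1 f x) := by
  rw [pd1_fderiv (f := fun y => L (f y)) ((L.differentiable.comp hf).differentiableAt),
    pd1_fderiv hf.differentiableAt]
  have h : fderiv ℝ (fun y => L (f y)) x = L.comp (fderiv ℝ f x) :=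
    (L.hasFDerivAt.comp x (hf.differentiableAt).hasFDerivAt).fderiv
  rw [h]; rfl

lemma pd0_iter_clm {E F : Type*} [NormedAddCommGroup E] [NormedSpace ℝ E]
    [NormedAddCommGroup F] [NormedSpace ℝ F]
    (L : E →L[ℝ] F) {f : ℝ × ℝ → E} (hf : ContDiff ℝ (⊤ : ℕ∞) f) (k : ℕ) :
    ContDiff ℝ (⊤ : ℕ∞) (pd0^[k] f) ∧
      (pd0^[k] (fun y => L (f y))) = fun y => L ((pd0^[k] f) y) := by
  induction k with
  | zero => exact ⟨hf, rfl⟩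
  | succ n ih =>
    refine ⟨?_, ?_⟩
    · simpa [Function.iterate_succ_apply'] using contDiff_pd0 ih.1
    · rw [Function.iterate_succ_apply', Function.iterate_succ_apply', ih.2]
      exact funext fun y => pd0_clm L (ih.1.differentiable (by simp)) y

lemma dC_mulVec (M : Matrix (Fin 4) (Fin 4) ℝ) (a b c d : Fin 4 → ℝ) :
    dC (M.mulVec a) (M.mulVec b) (M.mulVec c) (M.mulVec d) = M.det * dC a b c d := by
  unfold dC
  rw [← Matrix.det_mul]
  congr 1
  ext i j
  fin_cases j <;>
    simp [Matrix.mul_apply, Matrix.mulVec, dotProduct]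

/-- If `u, v : ℝ² → ℝ⁴` are smooth, `M` is invertible and `M·u = v` pointwise, then
`I₁(u) = I₁(v)` at every point where the denominator determinant of `u` does not vanish. -/
theorem stmt2 (u v : ℝ × ℝ → (Fin 4 → ℝ)) (M : Matrix (Fin 4) (Fin 4) ℝ)
    (hu : ContDiff ℝ (⊤ : ℕ∞) u) (hv : ContDiff ℝ (⊤ : ℕ∞) v)
    (hM : IsUnit M.det) (huv : ∀ x, M.mulVec (u x) = v x) (x : ℝ × ℝ)
    (hden : dC (pd0 u x) (pd1 u x) ((pd0^[2] u) x) ((pd0^[3] u) x) ≠ 0) :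
    I1 u x = I1 v x := by
  have hveq : v = fun y => M.mulVec (u y) := funext fun y => (huv y).symm
  set L : (Fin 4 → ℝ) →L[ℝ] (Fin 4 → ℝ) :=
    LinearMap.toContinuousLinearMap (Matrix.mulVecLin M) with hL
  have hLapp : ∀ w : Fin 4 → ℝ, L w = M.mulVec w := fun w => rfl
  have hiter : ∀ k, (pd0^[k] v) x = M.mulVec ((pd0^[k] u) x) := by
    intro k
    have := (pd0_iter_clm L hu k).2
    rw [hveq]
    calc (pd0^[k] fun y => M.mulVec (u y)) x = (pd0^[k] fun y => L (u y)) x := rfl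
      _ = L ((pd0^[k] u) x) := by rw [this]
  have hpd1 : pd1 v x = M.mulVec (pd1 u x) := by
    rw [hveq]
    exact pd1_clm L (hu.differentiable (by simp)) x
  have h1 : (pd0^[1] v) x = M.mulVec (pd0 u x) := hiter 1
  simp only [I1]
  rw [hiter 4, hiter 2, hiter 3, hpd1, show pd0 v x = M.mulVec (pd0 u x) from h1,
    dC_mulVec, dC_mulVec]
  rw [mul_div_mul_left _ _ (by simpa using hM.ne_zero)]
end

section
/- Let p : ℝ² → ℝ⁴ have components that are homogeneous polynomials of degree n in (t₀, t₁). Then the polynomial Δ(p) = det[p_{t₀}, p_{t₁}, p_{t₀²}, p_{t₀³}] is divisible by t₁. -/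
open MvPolynomial

/-- Bivariate real polynomials. -/
abbrev P2 := MvPolynomial (Fin 2) ℝ

/-- Determinant of the 4×4 matrix (over `ℝ[t₀,t₁]`) with columns `a, b, c, d`. -/
noncomputable def d4 (a b c d : Fin 4 → P2) : P2 :=
  Matrix.det (Matrix.of fun i j => ![a, b, c, d] j i)

/-- Componentwise partial derivative of a quadruple of polynomials. -/
noncomputable def pD (k : Fin 2) (p : Fin 4 → P2) : Fin 4 → P2 :=
  fun i => pderiv k (p i)

/-- `Δ(p) = det[p_{t₀}, p_{t₁}, p_{t₀²}, p_{t₀³}]`. -/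
noncomputable def Δp (p : Fin 4 → P2) : P2 :=
  d4 (pD 0 p) (pD 1 p) (pD 0 (pD 0 p)) (pD 0 (pD 0 (pD 0 p)))

noncomputable def phi : P2 →ₐ[ℝ] P2 := aeval ![X 0, 0]

lemma phi_X0 : phi (X 0) = X 0 := by simp [phi]
lemma phi_X1 : phi (X 1) = 0 := by simp [phi]

lemma L1 (q : P2) : (X 1 : P2) ∣ q - phi q := by
  induction q using MvPolynomial.induction_on with
  | C a => simp [phi, algebraMap_eq]
  | add p q hp hq => have := dvd_add hp hq; convert this using 1; simp; ring
  | mul_X p j hp =>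
      fin_cases j
      · show (X 1 : P2) ∣ p * X 0 - phi (p * X 0)
        have : p * X 0 - phi (p * X 0) = (p - phi p) * X 0 := by
          rw [map_mul, phi_X0]; ring
        rw [this]; exact hp.mul_right _
      · show (X 1 : P2) ∣ p * X 1 - phi (p * X 1)
        rw [map_mul, phi_X1, mul_zero, sub_zero]
        exact Dvd.intro_left p rfl

lemma L2 (q : P2) : pderiv 0 (phi q) = phi (pderiv 0 q) := by
  induction q using MvPolynomial.induction_on with
  | C a => simp [phi, algebraMap_eq]
  | add p q hp hq => simp [map_add, hp, hq]
  | mul_X p j hp =>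
      fin_cases j
      · show pderiv 0 (phi (p * X 0)) = phi (pderiv 0 (p * X 0))
        rw [map_mul, phi_X0, pderiv_mul, pderiv_X_self, hp, mul_one,
          pderiv_mul, pderiv_X_self, mul_one, map_add, map_mul, phi_X0]
      · show pderiv 0 (phi (p * X 1)) = phi (pderiv 0 (p * X 1))
        rw [map_mul, phi_X1, mul_zero, map_zero, pderiv_mul,
          pderiv_X_of_ne (by decide), mul_zero, add_zero, map_mul, phi_X1, mul_zero]

lemma L3 (n : ℕ) (q : P2) (hq : q.IsHomogeneous n) :
    phi q = C (coeff (Finsupp.single 0 n) q) * X 0 ^ n := by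
  conv_lhs => rw [q.as_sum]
  rw [map_sum, Finset.sum_eq_single (Finsupp.single (0 : Fin 2) n)]
  · rw [phi, aeval_monomial, algebraMap_eq,
      Finsupp.prod_single_index (by simp)]
    simp
  · intro b hb hbne
    have hco : coeff b q ≠ 0 := mem_support_iff.mp hb
    have hdeg := hq hco
    have hb1 : b 1 ≠ 0 := by
      intro h1
      apply hbne
      have hsum : b 0 + b 1 = n := by
        simpa [Finsupp.weight_apply, Finsupp.sum_fintype, Fin.sum_univ_two] using hdeg
      have hb0 : b 0 = n := by omega
      ext j
      fin_cases j
      · simpa using hb0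
      · simpa using h1
    rw [phi, aeval_monomial, Finsupp.prod_fintype _ _ (by simp)]
    rw [Fin.prod_univ_two]
    simp [zero_pow hb1]
  · intro h
    rw [notMem_support_iff.mp h]
    simp


lemma det_fin_four' {R : Type*} [CommRing R] (A : Matrix (Fin 4) (Fin 4) R) :
    A.det =
    A 0 0*A 1 1*A 2 2*A 3 3 - A 0 0*A 1 1*A 2 3*A 3 2 - A 0 0*A 1 2*A 2 1*A 3 3 + A 0 0*A 1 2*A 2 3*A 3 1 + A 0 0*A 1 3*A 2 1*A 3 2 - A 0 0*A 1 3*A 2 2*A 3 1 - A 0 1*A 1 0*A 2 2*A 3 3 + A 0 1*A 1 0*A 2 3*A 3 2 + A 0 1*A 1 2*A 2 0*A 3 3 - A 0 1*A 1 2*A 2 3*A 3 0 - A 0 1*A 1 3*A 2 0*A 3 2 + A 0 1*A 1 3*A 2 2*A 3 0 + A 0 2*A 1 0*A 2 1*A 3 3 - A 0 2*A 1 0*A 2 3*A 3 1 - A 0 2*A 1 1*A 2 0*A 3 3 + A 0 2*A 1 1*A 2 3*A 3 0 + A 0 2*A 1 3*A 2 0*A 3 1 - A 0 2*A 1 3*A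 2 1*A 3 0 - A 0 3*A 1 0*A 2 1*A 3 2 + A 0 3*A 1 0*A 2 2*A 3 1 + A 0 3*A 1 1*A 2 0*A 3 2 - A 0 3*A 1 1*A 2 2*A 3 0 - A 0 3*A 1 2*A 2 0*A 3 1 + A 0 3*A 1 2*A 2 1*A 3 0 := by
  have e1 : (Fin.succ 2 : Fin 4) = 3 := rfl
  have e2 : (Fin.castSucc 2 : Fin 4) = 2 := rfl
  have e3 : Fin.succAbove (2 : Fin 4) 2 = 3 := rfl
  have e4 : Fin.succAbove (1 : Fin 4) 2 = 3 := rfl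
  have e5 : Fin.succAbove (3 : Fin 4) 2 = 2 := rfl
  rw [Matrix.det_succ_row_zero]
  simp [Fin.sum_univ_succ, Matrix.det_fin_three, Matrix.submatrix_apply, Fin.succ_zero_eq_one,
    e1, e2, e3, e4, e5]
  ring

/-- If the components of `p` are homogeneous polynomials of degree `n`, then `t₁` divides
`Δ(p) = det[p_{t₀}, p_{t₁}, p_{t₀²}, p_{t₀³}]`. -/
theorem stmt4 (n : ℕ) (p : Fin 4 → P2) (hp : ∀ i, (p i).IsHomogeneous n) :
    (X 1 : P2) ∣ Δp p := by
  have key : phi (Δp p) = 0 := by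
    have h0 : ∀ i, phi (pderiv 0 (p i)) =
        C (coeff (Finsupp.single 0 n) (p i)) * pderiv 0 (X 0 ^ n) := by
      intro i
      rw [← L2, L3 n (p i) (hp i), pderiv_C_mul]
    have h2 : ∀ i, phi (pderiv 0 (pderiv 0 (p i))) =
        C (coeff (Finsupp.single 0 n) (p i)) * pderiv 0 (pderiv 0 (X 0 ^ n)) := by
      intro i
      rw [← L2, ← L2, L3 n (p i) (hp i), pderiv_C_mul, pderiv_C_mul]
    rw [Δp, d4, AlgHom.map_det, det_fin_four']
    simp only [AlgHom.mapMatrix_apply, Matrix.map_apply, Matrix.of_apply, Matrix.cons_val', Matrix.cons_val_zero,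
      Matrix.cons_val_one, Matrix.head_cons, Matrix.cons_val_two, Matrix.tail_cons,
      Matrix.cons_val_three, Matrix.vecHead, Matrix.vecTail, Function.comp_apply, Fin.succ_zero_eq_one, Fin.succ_one_eq_two,
      pD]
    rw [h0 0, h0 1, h0 2, h0 3, h2 0, h2 1, h2 2, h2 3]
    ring
  have := L1 (Δp p)
  rwa [key, sub_zero] at this
end

section
/- Let p : ℝ² → ℝ⁴ be a map with homogeneous polynomial components of degree n, and define Δ(p) = det[p_{t₀}, p_{t₁}, p_{t₀²}, p_{t₀³}] and A₂(p) = det[p_{t₀}, p_{t₀⁴}, p_{t₀²}, p_{t₀³}]. Then the map q = p_{t₀} satisfies t₁·Δ(q) = −(n−1)·A₂(p), where Δ(q) = det[q_{t₀}, q_{t₁}, q_{t₀²}, q_{t₀³}]. -/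
open MvPolynomial

/-- Explicit expansion of the 4×4 determinant `d4`. -/
lemma d4_expand (a b c d : Fin 4 → P2) : d4 a b c d =
    a 0 * (b 1 * (c 2 * d 3 - c 3 * d 2) - c 1 * (b 2 * d 3 - b 3 * d 2) + d 1 * (b 2 * c 3 - b 3 * c 2))
  - b 0 * (a 1 * (c 2 * d 3 - c 3 * d 2) - c 1 * (a 2 * d 3 - a 3 * d 2) + d 1 * (a 2 * c 3 - a 3 * c 2))
  + c 0 * (a 1 * (b 2 * d 3 - b 3 * d 2) - b 1 * (a 2 * d 3 - a 3 * d 2) + d 1 * (a 2 * b 3 - a 3 * b 2))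
  - d 0 * (a 1 * (b 2 * c 3 - b 3 * c 2) - b 1 * (a 2 * c 3 - a 3 * c 2) + c 1 * (a 2 * b 3 - a 3 * b 2)) := by
  simp [d4, Matrix.det_succ_row_zero, Fin.sum_univ_succ]
  simp [Fin.succAbove, Fin.lt_def]
  ring

/-- The degree (sum of exponents) of a finitely supported map on `Fin 2`. -/
lemma degree_fin_two (v : Fin 2 →₀ ℕ) : v.degree = v 0 + v 1 := by
  rw [Finsupp.degree_eq_weight_one]
  simp [Finsupp.weight_apply, Finsupp.sum_fintype, Fin.sum_univ_two]

/-- Euler identity for a monomial in two variables. -/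
lemma euler_monomial (d : Fin 2 →₀ ℕ) (c : ℝ) :
    (X 0 : P2) * pderiv 0 (monomial d c) + X 1 * pderiv 1 (monomial d c)
      = ((d 0 + d 1 : ℕ) : P2) * monomial d c := by
  have h : ∀ i : Fin 2, (X i : P2) * pderiv i (monomial d c)
      = ((d i : ℕ) : P2) * monomial d c := by
    intro i
    rw [pderiv_monomial]
    by_cases h0 : d i = 0
    · simp [h0]
    · rw [X, monomial_mul]
      have hd : Finsupp.single i 1 + (d - Finsupp.single i 1) = d := by
        ext j
        by_cases hj : j = i
        · subst hj; simp [Finsupp.single_apply]; omega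
        · simp [Finsupp.single_apply, Ne.symm hj]
      rw [hd, ← C_eq_coe_nat, C_mul_monomial]
      congr 1
      ring
  rw [h 0, h 1]
  push_cast
  ring

/-- Euler identity for a homogeneous polynomial in two variables. -/
lemma euler (m : ℕ) (f : P2) (hf : f.IsHomogeneous m) :
    (X 0 : P2) * pderiv 0 f + X 1 * pderiv 1 f = (m : P2) * f := by
  conv_lhs => rw [f.as_sum]
  conv_rhs => rw [f.as_sum]
  rw [map_sum, map_sum, Finset.mul_sum, Finset.mul_sum, Finset.mul_sum, ← Finset.sum_add_distrib]
  refine Finset.sum_congr rfl fun d hd => ?_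
  rw [euler_monomial]
  congr 2
  have := hf (mem_support_iff.mp hd)
  rw [← this]
  simp [Finsupp.weight_apply, Finsupp.sum_fintype, Fin.sum_univ_two]

/-- The partial derivative of a homogeneous polynomial is homogeneous of one less degree. -/
lemma isHomogeneous_pderiv (m : ℕ) (f : P2) (hf : f.IsHomogeneous m) (i : Fin 2) :
    (pderiv i f).IsHomogeneous (m - 1) := by
  have hrw : pderiv i f = ∑ d ∈ f.support, pderiv i (monomial d (coeff d f)) := by
    conv_lhs => rw [f.as_sum]
    rw [map_sum]
  rw [hrw, ← mem_homogeneousSubmodule]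
  refine Submodule.sum_mem _ fun d hd => ?_
  rw [mem_homogeneousSubmodule, pderiv_monomial]
  by_cases h0 : d i = 0
  · simp only [h0, Nat.cast_zero, mul_zero]
    rw [(monomial _).map_zero]
    exact isHomogeneous_zero _ _ _
  · apply isHomogeneous_monomial
    have hdeg : d 0 + d 1 = m := by
      have := hf (mem_support_iff.mp hd)
      rw [← this]
      simp [Finsupp.weight_apply, Finsupp.sum_fintype, Fin.sum_univ_two]
    rw [degree_fin_two]
    rw [Finsupp.tsub_apply, Finsupp.tsub_apply]
    fin_cases i <;> simp_all [Finsupp.single_apply] <;> omega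

/-- Abstract determinant computation underlying the theorem. -/
lemma key (c : P2) (A1 A2 A3 A4 E : Fin 4 → P2)
    (hE : ∀ i, (X 1 : P2) * E i = c * A1 i - X 0 * A2 i) :
    (X 1 : P2) * d4 A2 E A3 A4 = -c * d4 A1 A4 A2 A3 := by
  rw [d4_expand, d4_expand]
  linear_combination
    (-(A2 1 * (A3 2 * A4 3 - A3 3 * A4 2) - A3 1 * (A2 2 * A4 3 - A2 3 * A4 2)
      + A4 1 * (A2 2 * A3 3 - A2 3 * A3 2))) * hE 0
    + (A2 0 * (A3 2 * A4 3 - A3 3 * A4 2) - A3 0 * (A2 2 * A4 3 - A2 3 * A4 2)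
      + A4 0 * (A2 2 * A3 3 - A2 3 * A3 2)) * hE 1
    + (-(A2 0 * (A3 1 * A4 3 - A3 3 * A4 1) - A3 0 * (A2 1 * A4 3 - A2 3 * A4 1)
      + A4 0 * (A2 1 * A3 3 - A2 3 * A3 1))) * hE 2
    + (A2 0 * (A3 1 * A4 2 - A3 2 * A4 1) - A3 0 * (A2 1 * A4 2 - A2 2 * A4 1)
      + A4 0 * (A2 1 * A3 2 - A2 2 * A3 1)) * hE 3

/-- For `p` with homogeneous polynomial components of degree `n`, the map `q = p_{t₀}`
satisfies `t₁·Δ(q) = −(n − 1)·A₂(p)`, where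
`A₂(p) = det[p_{t₀}, p_{t₀⁴}, p_{t₀²}, p_{t₀³}]`. -/
theorem stmt12 (n : ℕ) (p : Fin 4 → P2) (hp : ∀ i, (p i).IsHomogeneous n) :
    (X 1 : P2) * Δp (pD 0 p)
      = -(((n : P2)) - 1) * d4 (pD 0 p) ((pD 0)^[4] p) (pD 0 (pD 0 p)) ((pD 0)^[3] p) := by
  have hiter3 : (pD 0)^[3] p = pD 0 (pD 0 (pD 0 p)) := by
    simp [Function.iterate_succ', Function.iterate_zero]
  have hiter4 : (pD 0)^[4] p = pD 0 (pD 0 (pD 0 (pD 0 p))) := by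
    simp [Function.iterate_succ', Function.iterate_zero]
  rcases Nat.eq_zero_or_pos n with hn | hn
  · subst hn
    have hz : pD 0 p = fun _ => 0 := by
      funext i
      have hdeg : (p i).totalDegree = 0 := Nat.le_zero.mp ((hp i).totalDegree_le)
      have hsupp := (totalDegree_eq_zero_iff (Fin 2) (p i)).mp hdeg
      simp only [pD]
      have hrw : pderiv (0 : Fin 2) (p i)
          = ∑ d ∈ (p i).support, pderiv (0 : Fin 2) (monomial d (coeff d (p i))) := by
        conv_lhs => rw [(p i).as_sum]
        rw [map_sum]
      rw [hrw]
      refine Finset.sum_eq_zero fun d hd => ?_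
      rw [pderiv_monomial, hsupp d hd 0]
      simp
    rw [hz, hiter3, hiter4, Δp, d4_expand, d4_expand]
    simp [pD]
  · have hq : ∀ i, ((pD 0 p) i).IsHomogeneous (n - 1) := fun i =>
      isHomogeneous_pderiv n (p i) (hp i) 0
    have hE : ∀ i, (X 1 : P2) * (pD 1 (pD 0 p)) i
        = ((n : P2) - 1) * (pD 0 p) i - X 0 * (pD 0 (pD 0 p)) i := by
      intro i
      have h := euler (n - 1) ((pD 0 p) i) (hq i)
      have hc : (((n - 1 : ℕ)) : P2) = (n : P2) - 1 := by
        have h1 : (1:ℕ) ≤ n := hn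
        push_cast [h1]
        ring
      rw [hc] at h
      simp only [pD] at h ⊢
      linear_combination h
    have hk := key ((n : P2) - 1) (pD 0 p) (pD 0 (pD 0 p)) (pD 0 (pD 0 (pD 0 p)))
      (pD 0 (pD 0 (pD 0 (pD 0 p)))) (pD 1 (pD 0 p)) hE
    rw [hiter3, hiter4, Δp]
    exact hk
end

section
/- Let F, G ∈ ℝ[t₀,t₁] be homogeneous polynomials of degrees d_F and d_G respectively, with G not identically zero, and suppose d_G·(∂F/∂t₀)·G = d_F·F·(∂G/∂t₀) as polynomials. Then F^{d_G} and G^{d_F} are proportional: there exists a constant c with F^{d_G} = c·G^{d_F}. -/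
open MvPolynomial

noncomputable def deh : MvPolynomial (Fin 2) ℝ →ₐ[ℝ] Polynomial ℝ :=
  aeval ![Polynomial.X, 1]

lemma deh_pderiv (P : MvPolynomial (Fin 2) ℝ) :
    Polynomial.derivative (deh P) = deh (pderiv 0 P) := by
  induction P using MvPolynomial.induction_on with
  | C a => simp [deh]
  | add p q hp hq => simp only [map_add, Polynomial.derivative_add, hp, hq]
  | mul_X p i hp =>
    rw [pderiv_mul, map_add, map_mul (f := deh), map_mul (f := deh), Polynomial.derivative_mul, hp]
    congr 1
    fin_cases i <;> simp [deh, pderiv_X]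

lemma deh_eq_zero {n : ℕ} {P : MvPolynomial (Fin 2) ℝ} (hP : P.IsHomogeneous n)
    (h0 : deh P = 0) : P = 0 := by
  by_contra hne
  obtain ⟨m, hm⟩ := Finset.nonempty_iff_ne_empty.2
    (fun hs => hne (MvPolynomial.support_eq_empty.mp hs))
  have hdeg : ∀ m' : Fin 2 →₀ ℕ, m' ∈ P.support → m' 0 + m' 1 = n := by
    intro m' hm'
    have h1 : m'.degree = n := by
      by_contra hd
      exact (mem_support_iff.1 hm') (hP.coeff_eq_zero hd)
    rw [← h1, Finsupp.degree_apply]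
    rw [Finset.sum_subset (Finset.subset_univ m'.support)
      (fun i _ hi => Finsupp.notMem_support_iff.1 hi)]
    exact (Fin.sum_univ_two m').symm
  have key : Polynomial.coeff (deh P) (m 0) = coeff m P := by
    have hrep : deh P = ∑ m' ∈ P.support,
        Polynomial.C (coeff m' P) * Polynomial.X ^ (m' 0) := by
      conv_lhs => rw [P.as_sum, map_sum]
      refine Finset.sum_congr rfl fun m' _ => ?_
      rw [deh, aeval_monomial, Finsupp.prod_pow]
      simp [Fin.prod_univ_two, Polynomial.algebraMap_eq]
    rw [hrep, Polynomial.finset_sum_coeff]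
    rw [Finset.sum_eq_single m]
    · simp
    · intro m' hm' hne'
      have : m' 0 ≠ m 0 := by
        intro he
        apply hne'
        ext i
        fin_cases i
        · exact he
        · show m' 1 = m 1
          have := hdeg m' hm'; have := hdeg m hm; omega
      simp [Polynomial.coeff_C_mul, Polynomial.coeff_X_pow, Ne.symm this]
    · intro hmm; exact absurd hm hmm
  rw [h0, Polynomial.coeff_zero] at key
  exact (mem_support_iff.1 hm) key.symm

open Polynomial in
lemma uni_prop (w v : Polynomial ℝ) (hv : v ≠ 0)
    (h : derivative w * v = w * derivative v) :
    ∃ c : ℝ, w = Polynomial.C c * v := by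
  rcases eq_or_ne w 0 with rfl | hw
  · exact ⟨0, by simp⟩
  set d := GCDMonoid.gcd w v with hd
  have hd0 : d ≠ 0 := by
    rw [hd, Ne, gcd_eq_zero_iff]
    tauto
  set a := w / d with ha
  set b := v / d with hb
  have had : d * a = w := EuclideanDomain.mul_div_cancel' hd0 (gcd_dvd_left w v)
  have hbd : d * b = v := EuclideanDomain.mul_div_cancel' hd0 (gcd_dvd_right w v)
  have hcop : IsCoprime a b := isCoprime_div_gcd_div_gcd hv
  have ha0 : a ≠ 0 := fun h0 => hw (by rw [← had, h0, mul_zero])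
  have hb0 : b ≠ 0 := fun h0 => hv (by rw [← hbd, h0, mul_zero])
  have key : derivative a * b = a * derivative b := by
    have h2 : d * d * (derivative a * b) = d * d * (a * derivative b) := by
      rw [← had, ← hbd, derivative_mul, derivative_mul] at h
      ring_nf at h ⊢
      linear_combination h
    exact mul_left_cancel₀ (mul_ne_zero hd0 hd0) h2
  have hder : ∀ p q : Polynomial ℝ, p ≠ 0 → IsCoprime p q →
      derivative p * q = p * derivative q → derivative p = 0 := by
    intro p q hp hpq hpq'
    by_contra hne
    have hdvd : p ∣ derivative p := by
      have h2 : p ∣ p * derivative q := dvd_mul_right _ _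
      rw [← hpq'] at h2
      exact hpq.dvd_of_dvd_mul_right h2
    have h1 : p.natDegree ≠ 0 := by
      intro h0
      rw [Polynomial.eq_C_of_natDegree_eq_zero h0, derivative_C] at hne
      exact hne rfl
    exact absurd (Polynomial.natDegree_le_of_dvd hdvd hne)
      (not_le.2 (Polynomial.natDegree_derivative_lt h1))
  have hda : derivative a = 0 := hder a b ha0 hcop key
  have hdb : derivative b = 0 := by
    have := hder b a hb0 hcop.symm (by linear_combination -key)
    exact this
  have hca : a = Polynomial.C (a.coeff 0) := Polynomial.eq_C_of_derivative_eq_zero hda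
  have hcb : b = Polynomial.C (b.coeff 0) := Polynomial.eq_C_of_derivative_eq_zero hdb
  have hcb0 : b.coeff 0 ≠ 0 := fun h0 => hb0 (by rw [hcb, h0, map_zero])
  refine ⟨a.coeff 0 / b.coeff 0, ?_⟩
  rw [← had, ← hbd, hca, hcb]
  rw [← mul_assoc, mul_comm (Polynomial.C _) d, mul_assoc, ← map_mul]
  congr 2
  simp [div_mul_cancel₀ _ hcb0]

lemma hom0_eq_C {p : MvPolynomial (Fin 2) ℝ} (hp : p.IsHomogeneous 0) :
    p = C (coeff 0 p) := by
  ext m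
  rcases eq_or_ne m 0 with rfl | hm
  · simp
  · rw [coeff_C, if_neg (Ne.symm hm)]
    exact hp.coeff_eq_zero (fun hdeg => hm ((Finsupp.degree_eq_zero_iff m).mp hdeg))

/-- If `F, G ∈ ℝ[t₀,t₁]` are homogeneous of degrees `d_F`, `d_G`, `G ≠ 0`, and
`d_G·F_{t₀}·G = d_F·F·G_{t₀}` as polynomials, then `F^{d_G} = c·G^{d_F}` for a constant `c`. -/
theorem stmt18 (dF dG : ℕ) (F G : MvPolynomial (Fin 2) ℝ)
    (hF : F.IsHomogeneous dF) (hG : G.IsHomogeneous dG) (hG0 : G ≠ 0)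
    (h : (dG : MvPolynomial (Fin 2) ℝ) * pderiv 0 F * G
      = (dF : MvPolynomial (Fin 2) ℝ) * F * pderiv 0 G) :
    ∃ c : ℝ, F ^ dG = C c * G ^ dF := by
  rcases Nat.eq_zero_or_pos dG with rfl | hdG
  · -- G is a nonzero constant
    have hGC : G = C (coeff 0 G) := hom0_eq_C hG
    have hg : coeff 0 G ≠ 0 := fun h0 => hG0 (by rw [hGC, h0, map_zero])
    refine ⟨((coeff 0 G) ^ dF)⁻¹, ?_⟩
    rw [pow_zero]
    nth_rewrite 2 [hGC]
    rw [← map_pow, ← map_mul, inv_mul_cancel₀ (pow_ne_zero _ hg), map_one]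
  rcases Nat.eq_zero_or_pos dF with rfl | hdF
  · have hFC : F = C (coeff 0 F) := hom0_eq_C hF
    refine ⟨(coeff 0 F) ^ dG, ?_⟩
    rw [pow_zero, mul_one, map_pow]
    nth_rewrite 1 [hFC]
    rfl
  -- main case
  set f := deh F with hf
  set g := deh G with hg
  have hg0 : g ≠ 0 := fun h0 => hG0 (deh_eq_zero hG h0)
  have h' : (dG : Polynomial ℝ) * Polynomial.derivative f * g
      = (dF : Polynomial ℝ) * f * Polynomial.derivative g := by
    have := congrArg deh h
    rw [map_mul, map_mul, map_mul, map_mul, map_natCast, map_natCast,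
      ← deh_pderiv, ← deh_pderiv] at this
    exact this
  obtain ⟨b, rfl⟩ : ∃ b, dG = b + 1 := ⟨dG - 1, by omega⟩
  obtain ⟨a, rfl⟩ : ∃ a, dF = a + 1 := ⟨dF - 1, by omega⟩
  have hwv : Polynomial.derivative (f ^ (b + 1)) * g ^ (a + 1)
      = f ^ (b + 1) * Polynomial.derivative (g ^ (a + 1)) := by
    rw [Polynomial.derivative_pow_succ, Polynomial.derivative_pow_succ]
    have hcast : ∀ n : ℕ, (Polynomial.C ((n : ℕ) + 1 : ℝ)) = ((n + 1 : ℕ) : Polynomial ℝ) := by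
      intro n; push_cast; simp
    rw [hcast, hcast]
    linear_combination (f ^ b * g ^ a) * h'
  obtain ⟨c, hc⟩ := uni_prop (f ^ (b + 1)) (g ^ (a + 1)) (pow_ne_zero _ hg0) hwv
  refine ⟨c, ?_⟩
  have hhom1 : (F ^ (b + 1)).IsHomogeneous ((a + 1) * (b + 1)) := by
    have := hF.pow (b + 1); rwa [mul_comm] at this ⊢
  have hhom2 : (C c * G ^ (a + 1)).IsHomogeneous ((a + 1) * (b + 1)) := by
    have := (hG.pow (a + 1)).C_mul c
    rwa [mul_comm (b + 1)] at this
  have hsub : F ^ (b + 1) - C c * G ^ (a + 1) = 0 := by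
    refine deh_eq_zero (hhom1.sub hhom2) ?_
    rw [map_sub, map_pow, map_mul, map_pow, ← hf, ← hg, hc]
    simp [deh]
  exact sub_eq_zero.mp hsub
end

section
/- Let p, q : ℝ² → ℝ⁴ be smooth maps such that the 4×4 matrices D(p) = [p_{t₀}, p_{t₁}, p_{t₀²}, p_{t₀³}] and D(q∘φ) are invertible everywhere on an open connected set, where φ(t₀,t₁) = (a t₀ + b t₁, c t₀ + d t₁) with ad − bc ≠ 0. If D(q∘φ)·(D(p))⁻¹ equals a constant matrix M on that set, then M·p = q∘φ on that set, provided the components of p and q are homogeneous polynomials of the same degree n. -/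
open MvPolynomial

/-- `D(w)`: the 4×4 matrix with columns `w_{t₀}, w_{t₁}, w_{t₀²}, w_{t₀³}`. -/
noncomputable def Dmat (w : ℝ × ℝ → (Fin 4 → ℝ)) : ℝ × ℝ → Matrix (Fin 4) (Fin 4) ℝ :=
  fun x => Matrix.of fun i j =>
    ![pd0 w x, pd1 w x, pd0 (pd0 w) x, pd0 (pd0 (pd0 w)) x] j i

lemma hasDerivAt_eval_comp (F : MvPolynomial (Fin 2) ℝ) (g h : ℝ → ℝ) (g' h' t : ℝ)
    (hg : HasDerivAt g g' t) (hh : HasDerivAt h h' t) :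
    HasDerivAt (fun s => eval ![g s, h s] F)
      (g' * eval ![g t, h t] (pderiv 0 F) + h' * eval ![g t, h t] (pderiv 1 F)) t := by
  induction F using MvPolynomial.induction_on with
  | C a => simpa using hasDerivAt_const t a
  | add F G hF hG =>
      have key := hF.add hG
      have e1 : (fun s => eval ![g s, h s] (F + G)) =
          fun s => eval ![g s, h s] F + eval ![g s, h s] G := by funext s; simp
      rw [e1]
      refine key.congr_deriv ?_
      simp only [map_add]
      ring
  | mul_X F j hF =>
      have hj : j = 0 ∨ j = 1 := by omega
      rcases hj with rfl | rfl
      · have key := hF.mul hg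
        have e1 : (fun s => eval ![g s, h s] (F * X 0)) =
            fun s => eval ![g s, h s] F * g s := by funext s; simp
        rw [e1]
        refine key.congr_deriv ?_
        simp only [pderiv_mul, pderiv_X_self, map_add, map_mul, eval_X, mul_one,
          pderiv_X_of_ne (show (1 : Fin 2) ≠ 0 by decide), pderiv_X_of_ne (show (0 : Fin 2) ≠ 1 by decide), map_zero, mul_zero, add_zero,
          Matrix.cons_val_zero]
        ring
      · have key := hF.mul hh
        have e1 : (fun s => eval ![g s, h s] (F * X 1)) =
            fun s => eval ![g s, h s] F * h s := by funext s; simp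
        rw [e1]
        refine key.congr_deriv ?_
        simp only [pderiv_mul, pderiv_X_self, map_add, map_mul, eval_X, mul_one,
          pderiv_X_of_ne (show (0 : Fin 2) ≠ 1 by decide), pderiv_X_of_ne (show (1 : Fin 2) ≠ 0 by decide), map_zero, mul_zero, add_zero,
          Matrix.cons_val_one, Matrix.head_cons, Matrix.cons_val_zero]
        ring

lemma eval_smul_of_homog {n : ℕ} {F : MvPolynomial (Fin 2) ℝ} (hF : F.IsHomogeneous n)
    (t : ℝ) (v : Fin 2 → ℝ) : eval (t • v) F = t ^ n * eval v F := by
  rw [eval_eq, eval_eq, Finset.mul_sum]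
  apply Finset.sum_congr rfl
  intro d hd
  have hsup : ∀ w : Fin 2 → ℝ, ∏ i ∈ d.support, w i ^ d i = ∏ i, w i ^ d i := by
    intro w
    refine Finset.prod_subset (Finset.subset_univ _) ?_
    intro i _ hi
    simp [Finsupp.notMem_support_iff.mp hi]
  have hdeg : ∑ i, d i = n := by
    have h1 : d.degree = n := by
      by_contra hne
      exact (mem_support_iff.mp hd) (hF.coeff_eq_zero hne)
    rw [← h1, Finsupp.degree]
    exact (Finset.sum_subset (Finset.subset_univ _)
      (fun i _ hi => Finsupp.notMem_support_iff.mp hi)).symm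
  rw [hsup, hsup]
  have : ∏ i, (t • v) i ^ d i = t ^ n * ∏ i, v i ^ d i := by
    simp only [Pi.smul_apply, smul_eq_mul, mul_pow]
    rw [Finset.prod_mul_distrib, Finset.prod_pow_eq_pow_sum, hdeg]
  rw [this]; ring

lemma euler_s19 {n : ℕ} {F : MvPolynomial (Fin 2) ℝ} (hF : F.IsHomogeneous n) (x y : ℝ) :
    x * eval ![x, y] (pderiv 0 F) + y * eval ![x, y] (pderiv 1 F) = n * eval ![x, y] F := by
  have hgx : HasDerivAt (fun s : ℝ => s * x) x 1 := by
    simpa using (hasDerivAt_id (1:ℝ)).mul_const x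
  have hgy : HasDerivAt (fun s : ℝ => s * y) y 1 := by
    simpa using (hasDerivAt_id (1:ℝ)).mul_const y
  have h1 : HasDerivAt (fun s : ℝ => eval ![s * x, s * y] F)
      (x * eval ![x, y] (pderiv 0 F) + y * eval ![x, y] (pderiv 1 F)) 1 := by
    have := hasDerivAt_eval_comp F (fun s => s * x) (fun s => s * y) x y 1 hgx hgy
    simpa using this
  have h2 : (fun s : ℝ => eval ![s * x, s * y] F) = fun s => s ^ n * eval ![x, y] F := by
    funext s
    have hv : ![s * x, s * y] = s • ![x, y] := by
      funext i; fin_cases i <;> simp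
    rw [hv, eval_smul_of_homog hF]
  rw [h2] at h1
  have h3 : HasDerivAt (fun s : ℝ => s ^ n * eval ![x, y] F)
      ((n * 1 ^ (n - 1)) * eval ![x, y] F) 1 := (hasDerivAt_pow n 1).mul_const _
  have h4 := h1.unique h3
  rcases Nat.eq_zero_or_pos n with hn | hn
  · subst hn; simpa using h4
  · simpa using h4

lemma pderiv_eq_zero_of_homog0 {F : MvPolynomial (Fin 2) ℝ} (hF : F.IsHomogeneous 0)
    (j : Fin 2) : pderiv j F = 0 := by
  conv_lhs => rw [F.as_sum]
  rw [map_sum]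
  apply Finset.sum_eq_zero
  intro m hm
  rw [pderiv_monomial]
  have := (totalDegree_eq_zero_iff _ F).mp
    ((totalDegree_zero_iff_isHomogeneous (Fin 2)).mpr hF) m hm j
  simp [this]


/-- If the components of `p` and `q` are homogeneous polynomials of the same degree `n`,
`φ(t₀,t₁) = (a t₀ + b t₁, c t₀ + d t₁)` with `ad − bc ≠ 0`, the matrices `D(p)` and
`D(q∘φ)` are invertible on an open connected set `s`, and `D(q∘φ)·D(p)⁻¹` equals a
constant matrix `M` on `s`, then `M·p = q∘φ` on `s`. -/
theorem stmt19 (n : ℕ) (p q : ℝ × ℝ → (Fin 4 → ℝ))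
    (P Q : Fin 4 → MvPolynomial (Fin 2) ℝ)
    (hP : ∀ i, (P i).IsHomogeneous n) (hQ : ∀ i, (Q i).IsHomogeneous n)
    (hpP : ∀ x i, p x i = eval ![x.1, x.2] (P i))
    (hqQ : ∀ x i, q x i = eval ![x.1, x.2] (Q i))
    (a b c d : ℝ) (hMob : a * d - b * c ≠ 0)
    (φ : ℝ × ℝ → ℝ × ℝ) (hφ : ∀ x, φ x = (a * x.1 + b * x.2, c * x.1 + d * x.2))
    (s : Set (ℝ × ℝ)) (hs : IsOpen s) (hconn : IsConnected s)
    (hinvp : ∀ x ∈ s, IsUnit (Dmat p x).det)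
    (hinvq : ∀ x ∈ s, IsUnit (Dmat (q ∘ φ) x).det)
    (M : Matrix (Fin 4) (Fin 4) ℝ)
    (hM : ∀ x ∈ s, Dmat (q ∘ φ) x * (Dmat p x)⁻¹ = M) :
    ∀ x ∈ s, M.mulVec (p x) = q (φ x) := by
  have hp : p = fun x => fun i => eval ![x.1, x.2] (P i) := by
    funext x i; exact hpP x i
  have hq : q = fun x => fun i => eval ![x.1, x.2] (Q i) := by
    funext x i; exact hqQ x i
  subst hp; subst hq
  -- partial derivatives of p
  have hpd0p : ∀ y : ℝ × ℝ, pd0 (fun x => fun i => eval ![x.1, x.2] (P i)) y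
      = fun i => eval ![y.1, y.2] (pderiv 0 (P i)) := by
    intro y
    have hD : HasDerivAt (fun s : ℝ => (fun i => eval ![s, y.2] (P i)))
        (fun i => eval ![y.1, y.2] (pderiv 0 (P i))) y.1 := by
      rw [hasDerivAt_pi]
      intro i
      have := hasDerivAt_eval_comp (P i) (fun s => s) (fun _ => y.2) 1 0 y.1
        (hasDerivAt_id _) (hasDerivAt_const _ _)
      simpa using this
    exact hD.deriv
  have hpd1p : ∀ y : ℝ × ℝ, pd1 (fun x => fun i => eval ![x.1, x.2] (P i)) y
      = fun i => eval ![y.1, y.2] (pderiv 1 (P i)) := by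
    intro y
    have hD : HasDerivAt (fun s : ℝ => (fun i => eval ![y.1, s] (P i)))
        (fun i => eval ![y.1, y.2] (pderiv 1 (P i))) y.2 := by
      rw [hasDerivAt_pi]
      intro i
      have := hasDerivAt_eval_comp (P i) (fun _ => y.1) (fun s => s) 0 1 y.2
        (hasDerivAt_const _ _) (hasDerivAt_id _)
      simpa using this
    exact hD.deriv
  -- partial derivatives of q ∘ φ
  have hcomp : ∀ y : ℝ × ℝ, ((fun x => fun i => eval ![x.1, x.2] (Q i)) ∘ φ) y
      = fun i => eval ![a * y.1 + b * y.2, c * y.1 + d * y.2] (Q i) := by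
    intro y; funext i
    simp [Function.comp, hφ y]
  have hpd0q : ∀ y : ℝ × ℝ, pd0 ((fun x => fun i => eval ![x.1, x.2] (Q i)) ∘ φ) y
      = fun i => a * eval ![a * y.1 + b * y.2, c * y.1 + d * y.2] (pderiv 0 (Q i))
          + c * eval ![a * y.1 + b * y.2, c * y.1 + d * y.2] (pderiv 1 (Q i)) := by
    intro y
    unfold pd0
    have e : (fun s : ℝ => ((fun x => fun i => eval ![x.1, x.2] (Q i)) ∘ φ) (s, y.2))
        = fun s => fun i => eval ![a * s + b * y.2, c * s + d * y.2] (Q i) := by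
      funext s; exact hcomp (s, y.2)
    rw [e]
    have hD : HasDerivAt (fun s : ℝ => (fun i => eval ![a * s + b * y.2, c * s + d * y.2] (Q i)))
        (fun i => a * eval ![a * y.1 + b * y.2, c * y.1 + d * y.2] (pderiv 0 (Q i))
          + c * eval ![a * y.1 + b * y.2, c * y.1 + d * y.2] (pderiv 1 (Q i))) y.1 := by
      rw [hasDerivAt_pi]
      intro i
      have hg : HasDerivAt (fun s : ℝ => a * s + b * y.2) a y.1 := by
        simpa using ((hasDerivAt_id y.1).const_mul a).add_const (b * y.2)
      have hh : HasDerivAt (fun s : ℝ => c * s + d * y.2) c y.1 := by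
        simpa using ((hasDerivAt_id y.1).const_mul c).add_const (d * y.2)
      have := hasDerivAt_eval_comp (Q i) _ _ a c y.1 hg hh
      simpa using this
    exact hD.deriv
  have hpd1q : ∀ y : ℝ × ℝ, pd1 ((fun x => fun i => eval ![x.1, x.2] (Q i)) ∘ φ) y
      = fun i => b * eval ![a * y.1 + b * y.2, c * y.1 + d * y.2] (pderiv 0 (Q i))
          + d * eval ![a * y.1 + b * y.2, c * y.1 + d * y.2] (pderiv 1 (Q i)) := by
    intro y
    unfold pd1
    have e : (fun s : ℝ => ((fun x => fun i => eval ![x.1, x.2] (Q i)) ∘ φ) (y.1, s))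
        = fun s => fun i => eval ![a * y.1 + b * s, c * y.1 + d * s] (Q i) := by
      funext s; exact hcomp (y.1, s)
    rw [e]
    have hD : HasDerivAt (fun s : ℝ => (fun i => eval ![a * y.1 + b * s, c * y.1 + d * s] (Q i)))
        (fun i => b * eval ![a * y.1 + b * y.2, c * y.1 + d * y.2] (pderiv 0 (Q i))
          + d * eval ![a * y.1 + b * y.2, c * y.1 + d * y.2] (pderiv 1 (Q i))) y.2 := by
      rw [hasDerivAt_pi]
      intro i
      have hg : HasDerivAt (fun s : ℝ => a * y.1 + b * s) b y.2 := by
        simpa using (((hasDerivAt_id y.2).const_mul b).const_add (a * y.1))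
      have hh : HasDerivAt (fun s : ℝ => c * y.1 + d * s) d y.2 := by
        simpa using (((hasDerivAt_id y.2).const_mul d).const_add (c * y.1))
      have := hasDerivAt_eval_comp (Q i) _ _ b d y.2 hg hh
      simpa using this
    exact hD.deriv
  rcases Nat.eq_zero_or_pos n with hn | hn
  · -- degree 0: contradiction with invertibility of Dmat p
    exfalso
    obtain ⟨x₀, hx₀⟩ := hconn.nonempty
    subst hn
    have hdet : (Dmat (fun x => fun i => eval ![x.1, x.2] (P i)) x₀).det = 0 := by
      apply Matrix.det_eq_zero_of_column_eq_zero 0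
      intro i
      simp only [Dmat, Matrix.of_apply, Matrix.cons_val_zero]
      rw [hpd0p x₀]
      simp [pderiv_eq_zero_of_homog0 (hP i) 0]
    have := hinvp x₀ hx₀
    rw [hdet] at this
    exact this.ne_zero rfl
  -- main case
  intro x hx
  have hDM : Dmat ((fun x => fun i => eval ![x.1, x.2] (Q i)) ∘ φ) x
      = M * Dmat (fun x => fun i => eval ![x.1, x.2] (P i)) x := by
    rw [← hM x hx, Matrix.nonsing_inv_mul_cancel_right _ _ (hinvp x hx)]
  have hcol0 : pd0 ((fun x => fun i => eval ![x.1, x.2] (Q i)) ∘ φ) x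
      = M.mulVec (pd0 (fun x => fun i => eval ![x.1, x.2] (P i)) x) := by
    funext i
    have h := congrFun (congrFun hDM i) 0
    simpa [Dmat, Matrix.mul_apply, Matrix.mulVec, dotProduct] using h
  have hcol1 : pd1 ((fun x => fun i => eval ![x.1, x.2] (Q i)) ∘ φ) x
      = M.mulVec (pd1 (fun x => fun i => eval ![x.1, x.2] (P i)) x) := by
    funext i
    have h := congrFun (congrFun hDM i) 1
    simpa [Dmat, Matrix.mul_apply, Matrix.mulVec, dotProduct] using h
  funext i
  show M.mulVec (fun k => eval ![x.1, x.2] (P k)) i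
      = eval ![(φ x).1, (φ x).2] (Q i)
  have hφ1 : (φ x).1 = a * x.1 + b * x.2 := by rw [hφ x]
  have hφ2 : (φ x).2 = c * x.1 + d * x.2 := by rw [hφ x]
  rw [hφ1, hφ2]
  have hnne : (n : ℝ) ≠ 0 := Nat.cast_ne_zero.mpr hn.ne'
  apply mul_left_cancel₀ hnne
  have c0 : (fun i => a * eval ![a * x.1 + b * x.2, c * x.1 + d * x.2] (pderiv 0 (Q i))
        + c * eval ![a * x.1 + b * x.2, c * x.1 + d * x.2] (pderiv 1 (Q i)))
      = M.mulVec (fun k => eval ![x.1, x.2] (pderiv 0 (P k))) := by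
    rw [← hpd0q x, ← hpd0p x]; exact hcol0
  have c1 : (fun i => b * eval ![a * x.1 + b * x.2, c * x.1 + d * x.2] (pderiv 0 (Q i))
        + d * eval ![a * x.1 + b * x.2, c * x.1 + d * x.2] (pderiv 1 (Q i)))
      = M.mulVec (fun k => eval ![x.1, x.2] (pderiv 1 (P k))) := by
    rw [← hpd1q x, ← hpd1p x]; exact hcol1
  have c0i := congrFun c0 i
  have c1i := congrFun c1 i
  have e1 : (n : ℝ) * M.mulVec (fun k => eval ![x.1, x.2] (P k)) i
      = x.1 * M.mulVec (fun k => eval ![x.1, x.2] (pderiv 0 (P k))) i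
        + x.2 * M.mulVec (fun k => eval ![x.1, x.2] (pderiv 1 (P k))) i := by
    simp only [Matrix.mulVec, dotProduct, Finset.mul_sum, ← Finset.sum_add_distrib]
    refine Finset.sum_congr rfl fun k _ => ?_
    linear_combination M i k * (euler_s19 (hP k) x.1 x.2).symm
  have e4 := euler_s19 (hQ i) (a * x.1 + b * x.2) (c * x.1 + d * x.2)
  linear_combination e1 - x.1 * c0i - x.2 * c1i + e4
end
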